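/- (Ren–Wang) Let 1 ≤ k ≤ n and let κ ∈ K_k with entries ordered κ_1 ≥ κ_2 ≥ ⋯ ≥ κ_n. Then for every index i with κ_i ≤ 0, one has κ_i > −((n−k)/k) · κ_1. -/

import Mathlib

open Finset

def esymmS (n k : ℕ) (κ : Fin n → ℝ) : ℝ :=
  ∑ s ∈ Finset.powersetCard k (Finset.univ : Finset (Fin n)), ∏ i ∈ s, κ i

def GardingCone (n k : ℕ) : Set (Fin n → ℝ) :=
  {κ | ∀ j : ℕ, 1 ≤ j → j ≤ k → 0 < esymmS n j κ}

/-!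
Delete the entry `κ_i ≤ 0`: the remaining `m = n - 1` entries `s` still lie in `Γ_k`, since
`σ_j(κ) = σ_j(s) + κ_i σ_{j-1}(s)`, and positivity of `σ_k(κ)` reads
`-κ_i σ_{k-1}(s) < σ_k(s)`. On `Γ_k` one has the Newton–Maclaurin type bound
`k m σ_k ≤ (m - k + 1) σ_1 σ_{k-1}`, by induction on `m`: by Rolle the roots of the derivative
of `∏ (X - x)` are `m - 1` reals whose symmetric functions are proportional to those of `s`,
and when `m = k` all entries are positive and the bound is Cauchy–Schwarz. With
`σ_1(s) ≤ (n - 1) κ_1` this gives `k σ_k(s) ≤ (n - k) κ_1 σ_{k-1}(s)`.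
-/

open Polynomial

namespace Multiset

section CommSemiring

variable {R : Type*} [CommSemiring R]

theorem esymm_zero (s : Multiset R) : s.esymm 0 = 1 := by
  simp [esymm, powersetCard_zero_left]

theorem esymm_one (s : Multiset R) : s.esymm 1 = s.sum := by
  simp [esymm, powersetCard_one, map_map]

theorem esymm_eq_zero_of_card_lt {s : Multiset R} {j : ℕ} (h : card s < j) : s.esymm j = 0 := by
  simp [esymm, powersetCard_eq_empty _ h]

theorem esymm_cons_succ (a : R) (s : Multiset R) (j : ℕ) :
    (a ::ₘ s).esymm (j + 1) = s.esymm (j + 1) + a * s.esymm j := by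
  simp [esymm, powersetCard_cons, map_map, sum_map_mul_left]

theorem esymm_card (s : Multiset R) : s.esymm (card s) = s.prod := by
  induction s using Multiset.induction_on with
  | empty => simp [esymm_zero]
  | cons a s ih =>
    rw [card_cons, esymm_cons_succ, ih, esymm_eq_zero_of_card_lt (Nat.lt_succ_self _), prod_cons,
      zero_add]

end CommSemiring

theorem esymm_card_cons_eq_prod_mul_sum_inv {K : Type*} [Field K] {a : K} {s : Multiset K}
    (ha : a ≠ 0) (hs : ∀ x ∈ s, x ≠ 0) :
    (a ::ₘ s).esymm (card s) = (a ::ₘ s).prod * ((a ::ₘ s).map (·⁻¹)).sum := by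
  induction s using Multiset.induction_on generalizing a with
  | empty => simp [esymm_zero, ha]
  | cons b s ih =>
    have hb : b ≠ 0 := hs b (mem_cons_self b s)
    rw [card_cons, esymm_cons_succ, ← card_cons b s, esymm_card,
      ih hb fun x hx => hs x (mem_cons_of_mem hx)]
    simp only [prod_cons, map_cons, sum_cons]
    field_simp

theorem card_sq_le_sum_mul_sum_inv {R : Type*} [Semifield R] [LinearOrder R]
    [IsStrictOrderedRing R] [ExistsAddOfLE R] {s : Multiset R} (hs : ∀ x ∈ s, 0 < x) :
    (card s : R) ^ 2 ≤ s.sum * (s.map (·⁻¹)).sum := by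
  have := Finset.sum_sq_le_sum_mul_sum_of_sq_le_mul (univ : Finset s) (r := fun _ => 1)
    (f := fun x => (x : R)) (g := fun x => (x : R)⁻¹) (fun x _ => (hs x coe_mem).le)
    (fun x _ => (inv_pos.2 (hs x coe_mem)).le)
    (fun x _ => by rw [one_pow, mul_inv_cancel₀ (hs x coe_mem).ne'])
  simpa [Finset.sum_eq_multiset_sum, card_coe] using this

section Derivative

variable (s : Multiset ℝ)

theorem card_roots_derivative_prod_X_sub_C (hs : s ≠ 0) :
    card (derivative (s.map fun x => X - C x).prod).roots + 1 = card s := by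
  set p := (s.map fun x => X - C x).prod
  have hdeg : p.natDegree = card s := natDegree_multiset_prod_X_sub_C_eq_card s
  have hpos : 0 < card s := card_pos.2 hs
  apply le_antisymm
  · have := (card_roots' (derivative p)).trans (natDegree_derivative_le p)
    omega
  · simpa [p, roots_multiset_prod_X_sub_C] using card_roots_le_derivative p

theorem esymm_roots_derivative_prod_X_sub_C {j : ℕ} (hj : j < card s) :
    (card s : ℝ) * (derivative (s.map fun x => X - C x).prod).roots.esymm j =
      ((card s : ℝ) - j) * s.esymm j := by
  set t := (derivative (s.map fun x => X - C x).prod).roots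
  have ht : card t + 1 = card s :=
    card_roots_derivative_prod_X_sub_C s (by rintro rfl; simp at hj)
  have hroots : card t = (derivative (s.map fun x => X - C x).prod).natDegree := by
    have h1 : card t ≤ _ := card_roots' _
    have h2 := natDegree_derivative_le (s.map fun x => X - C x).prod
    rw [natDegree_multiset_prod_X_sub_C_eq_card] at h2
    omega
  set c := (derivative (s.map fun x => X - C x).prod).leadingCoeff
  have hcoeff : ∀ i ≤ card t,
      c * ((-1) ^ i * t.esymm i) = ((card s : ℝ) - i) * ((-1) ^ i * s.esymm i) := by
    intro i hi
    have h := congrArg (coeff · (card t - i)) (C_leadingCoeff_mul_prod_multiset_X_sub_C hroots)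
    simp only [coeff_C_mul, coeff_derivative] at h
    rw [prod_X_sub_C_coeff t (Nat.sub_le _ i),
      prod_X_sub_C_coeff s (show card t - i + 1 ≤ card s by omega),
      show card t - (card t - i) = i by omega, show card s - (card t - i + 1) = i by omega] at h
    refine h.trans ?_
    rw [← ht]
    push_cast [Nat.cast_sub hi]
    ring
  have hc : c = card s := by simpa [esymm_zero] using hcoeff 0 (Nat.zero_le _)
  have h := hcoeff j (by omega)
  rw [hc, mul_left_comm, mul_left_comm _ ((-1) ^ j)] at h
  exact mul_left_cancel₀ (pow_ne_zero _ (by norm_num)) h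

end Derivative

def InGardingCone (k : ℕ) (s : Multiset ℝ) : Prop :=
  ∀ j ≤ k, 0 < s.esymm j

namespace InGardingCone

variable {k : ℕ} {s : Multiset ℝ}

theorem le_card (h : s.InGardingCone k) : k ≤ card s := by
  by_contra! hk
  exact (h k le_rfl).ne' (esymm_eq_zero_of_card_lt hk)

theorem of_cons {a : ℝ} (ha : a ≤ 0) (h : (a ::ₘ s).InGardingCone k) : s.InGardingCone k := by
  intro j hj
  induction j with
  | zero => simp [esymm_zero]
  | succ j ih =>
    have h' := h (j + 1) hj
    rw [esymm_cons_succ] at h'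
    nlinarith [ih (by omega)]

theorem pos_of_mem (h : s.InGardingCone (card s)) {x : ℝ} (hx : x ∈ s) : 0 < x := by
  obtain ⟨t, rfl⟩ := exists_cons_of_mem hx
  by_contra! hx0
  simpa using (h.of_cons hx0).le_card

theorem roots_derivative_prod_X_sub_C (h : s.InGardingCone k) (hk : k < card s) :
    (derivative (s.map fun x => X - C x).prod).roots.InGardingCone k := by
  intro j hj
  have hrel := esymm_roots_derivative_prod_X_sub_C s (hj.trans_lt hk)
  have hj' : (j : ℝ) < card s := by exact_mod_cast hj.trans_lt hk
  refine pos_of_mul_pos_right (a := (card s : ℝ)) ?_ (Nat.cast_nonneg _)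
  rw [hrel]
  exact mul_pos (sub_pos.2 hj') (h j hj)

theorem mul_esymm_succ_le (h : s.InGardingCone (k + 1)) :
    (k + 1) * card s * s.esymm (k + 1) ≤ (card s - k) * s.esymm 1 * s.esymm k := by
  induction hm : card s generalizing s with
  | zero => have := h.le_card; omega
  | succ m ih =>
    rcases (h.le_card.trans_eq hm).eq_or_lt with hkm | hkm
    · obtain rfl : k = m := by omega
      have hpos : ∀ x ∈ s, 0 < x := fun x hx =>
        (show s.InGardingCone (card s) by rwa [hm]).pos_of_mem hx
      obtain ⟨a, t, rfl⟩ : ∃ a t, s = a ::ₘ t := by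
        obtain ⟨a, ha⟩ := exists_mem_of_ne_zero (s := s) (by rintro rfl; simp at hm)
        exact ⟨a, _, (cons_erase ha).symm⟩
      have ht : card t = k := by simpa using hm
      have htop : (a ::ₘ t).esymm (k + 1) = (a ::ₘ t).prod := by rw [← hm, esymm_card]
      have hsub : (a ::ₘ t).esymm k = (a ::ₘ t).prod * ((a ::ₘ t).map (·⁻¹)).sum := by
        rw [← ht]
        exact esymm_card_cons_eq_prod_mul_sum_inv (hpos a (mem_cons_self a t)).ne'
          fun x hx => (hpos x (mem_cons_of_mem hx)).ne'
      have hcs := card_sq_le_sum_mul_sum_inv hpos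
      rw [hm] at hcs
      rw [htop, hsub, esymm_one]
      push_cast at hcs ⊢
      nlinarith [mul_le_mul_of_nonneg_right hcs (prod_pos hpos).le]
    · set t := (derivative (s.map fun x => X - C x).prod).roots
      have htcard : card t = m := by
        have : card t + 1 = card s :=
          card_roots_derivative_prod_X_sub_C s (by rintro rfl; simp at hm)
        omega
      have hrel : ∀ j < m + 1, ((m : ℝ) + 1) * t.esymm j = ((m : ℝ) + 1 - j) * s.esymm j := by
        intro j hj
        have := esymm_roots_derivative_prod_X_sub_C s (hm ▸ hj)
        rwa [hm, Nat.cast_succ] at this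
      have ih := ih (h.roots_derivative_prod_X_sub_C (hm ▸ hkm)) htcard
      have e1 := hrel 1 (by omega)
      have ek := hrel k (by omega)
      have ek1 := hrel (k + 1) hkm
      have hmk : (k : ℝ) < m := by exact_mod_cast Nat.lt_of_succ_lt_succ hkm
      have hk0 : (0 : ℝ) ≤ k := Nat.cast_nonneg k
      have key : (m * (m - k)) * ((k + 1) * (m + 1) * s.esymm (k + 1)) ≤
          (m * (m - k)) * ((m + 1 - k) * s.esymm 1 * s.esymm k) :=
        calc (m * (m - k)) * ((k + 1) * (m + 1) * s.esymm (k + 1))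
            = (m + 1) * (m + 1) * ((k + 1) * m * t.esymm (k + 1)) := by
              push_cast at ek1
              linear_combination (-(k + 1) * m * (m + 1)) * ek1
          _ ≤ (m + 1) * (m + 1) * ((m - k) * t.esymm 1 * t.esymm k) := by gcongr
          _ = (m * (m - k)) * ((m + 1 - k) * s.esymm 1 * s.esymm k) := by
              push_cast at e1
              linear_combination (m - k) * ((m + 1) * t.esymm k * e1 + m * s.esymm 1 * ek)
      push_cast
      exact le_of_mul_le_mul_left key (mul_pos (by linarith) (by linarith))

theorem neg_mul_lt_of_cons {a M : ℝ} (ha : a ≤ 0) (h : (a ::ₘ s).InGardingCone (k + 1))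
    (hM : ∀ x ∈ s, x ≤ M) : -a * (k + 1) < (card s - k) * M := by
  have hs := h.of_cons ha
  have hσk : 0 < s.esymm k := hs k (by omega)
  have hσ : 0 < s.esymm (k + 1) + a * s.esymm k := esymm_cons_succ a s k ▸ h (k + 1) le_rfl
  have hcard : (0 : ℝ) < card s := by exact_mod_cast (Nat.succ_pos k).trans_le hs.le_card
  have hkcard : (k : ℝ) ≤ card s := by exact_mod_cast (Nat.le_succ k).trans hs.le_card
  have hsum : s.sum ≤ card s * M := by simpa using sum_le_card_nsmul s M hM
  have hbound : (k + 1) * s.esymm (k + 1) ≤ (card s - k) * M * s.esymm k := by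
    refine le_of_mul_le_mul_left ?_ hcard
    calc (card s : ℝ) * ((k + 1) * s.esymm (k + 1))
        = (k + 1) * card s * s.esymm (k + 1) := by ring
      _ ≤ (card s - k) * s.esymm 1 * s.esymm k := hs.mul_esymm_succ_le
      _ ≤ (card s - k) * (card s * M) * s.esymm k := by
        rw [esymm_one]
        gcongr
      _ = card s * ((card s - k) * M * s.esymm k) := by ring
  refine lt_of_mul_lt_mul_right ?_ hσk.le
  calc -a * (k + 1) * s.esymm k < (k + 1) * s.esymm (k + 1) := by
        have hk : (0 : ℝ) < k + 1 := by positivity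
        nlinarith
    _ ≤ (card s - k) * M * s.esymm k := hbound

end InGardingCone

theorem inGardingCone_iff_mem_gardingCone {n k : ℕ} {κ : Fin n → ℝ} :
    (univ.val.map κ).InGardingCone k ↔ κ ∈ GardingCone n k := by
  simp only [InGardingCone, GardingCone, esymmS, ← Finset.esymm_map_val]
  refine ⟨fun h j _ hj => h j hj, fun h j hj => ?_⟩
  rcases j.eq_zero_or_pos with rfl | hj0
  · simp [esymm_zero]
  · exact h j hj0 hj

end Multiset

theorem renWang_lower_bound_general (n k : ℕ) (hn : 1 ≤ n) (hk1 : 1 ≤ k)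
    (κ : Fin n → ℝ) (hκ : κ ∈ GardingCone n k)
    (hord : ∀ i j : Fin n, i ≤ j → κ j ≤ κ i)
    (i : Fin n) (hi : κ i ≤ 0) :
    -(((n : ℝ) - (k : ℝ)) / (k : ℝ)) * κ ⟨0, hn⟩ < κ i := by
  obtain ⟨k, rfl⟩ : ∃ k', k = k' + 1 := ⟨k - 1, by omega⟩
  set s := (univ.val.map κ).erase (κ i)
  have hs : κ i ::ₘ s = univ.val.map κ :=
    Multiset.cons_erase (Multiset.mem_map_of_mem _ (mem_univ i))
  have hcard : (n : ℝ) = Multiset.card s + 1 := by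
    exact_mod_cast (by simpa using (congrArg Multiset.card hs).symm)
  have hcone : (κ i ::ₘ s).InGardingCone (k + 1) :=
    hs ▸ Multiset.inGardingCone_iff_mem_gardingCone.2 hκ
  have hmax : ∀ x ∈ s, x ≤ κ ⟨0, hn⟩ := by
    intro x hx
    obtain ⟨j, -, rfl⟩ := Multiset.mem_map.1 (Multiset.mem_of_mem_erase hx)
    exact hord _ j (Nat.zero_le _)
  have key := hcone.neg_mul_lt_of_cons hi hmax
  rw [hcard]
  push_cast
  rw [neg_mul, neg_lt, div_mul_eq_mul_div, lt_div_iff₀ (by positivity)]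
  linarith

/-- Ren–Wang: if `κ ∈ K_k` is ordered decreasingly and `κ_i ≤ 0`, then
`κ_i > −((n−k)/k)·κ_1` (where `κ_1` is the largest entry). -/
theorem renWang_lower_bound (n k : ℕ) (hn : 1 ≤ n) (hk1 : 1 ≤ k) (hkn : k ≤ n)
    (κ : Fin n → ℝ) (hκ : κ ∈ GardingCone n k)
    (hord : ∀ i j : Fin n, i ≤ j → κ j ≤ κ i)
    (i : Fin n) (hi : κ i ≤ 0) :
    -(((n : ℝ) - (k : ℝ)) / (k : ℝ)) * κ ⟨0, hn⟩ < κ i :=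
  renWang_lower_bound_general n k hn hk1 κ hκ hord i hi
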